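/- Let n ≥ 2, let S, S' ⊆ {1,...,n} be subsets which both contain the index i ∈ {1,...,n}, and let σ be a face of the arrangement D_{n,S} which is contained in the coordinate hyperplane H_i = {x ∈ ℝ^n : x_i = 0}. Then σ is also a face of D_{n,S'}. -/
import Mathlib


noncomputable section

/-- A face of a (central) hyperplane arrangement in `ℝⁿ`, the arrangement being given by a
set `A` of normal vectors of its hyperplanes. -/
def IsFace (n : ℕ) (A : Set (Fin n → ℝ)) (σ : Set (Fin n → ℝ)) : Prop :=
  σ.Nonempty ∧ ∃ ε : (Fin n → ℝ) → SignType,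
    σ = {x | ∀ a ∈ A, SignType.sign (∑ t, a t * x t) = ε a}

/-- The set of normal vectors of the arrangement `D_{n,S}`: the normals `e_i − e_j`,
`e_i + e_j` of the hyperplanes `{x_i = x_j}`, `{x_i = −x_j}` for `i < j`, together with the
normals `e_k` of the coordinate hyperplanes `H_k` for `k ∈ S`. -/
def dnsArr (n : ℕ) (S : Set (Fin n)) : Set (Fin n → ℝ) :=
  {v | ∃ i j : Fin n, i < j ∧
    (v = Pi.single i (1 : ℝ) - Pi.single j 1 ∨ v = Pi.single i (1 : ℝ) + Pi.single j 1)} ∪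
  {v | ∃ k ∈ S, v = Pi.single k (1 : ℝ)}

lemma sum_single_mul {n : ℕ} (k : Fin n) (x : Fin n → ℝ) :
    ∑ t, (Pi.single k 1 : Fin n → ℝ) t * x t = x k := by
  simp [Pi.single_apply, ite_mul]

lemma single_inj {n : ℕ} {k l : Fin n}
    (h : (Pi.single k 1 : Fin n → ℝ) = Pi.single l 1) : k = l := by
  by_contra hkl
  have := congrFun h k
  simp [Pi.single_apply, Ne.symm hkl] at this

lemma single_ne_sub {n : ℕ} {k j l : Fin n} (hjl : j < l) :
    (Pi.single j 1 : Fin n → ℝ) - Pi.single l 1 ≠ Pi.single k 1 := by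
  intro h
  have h1 := congrFun h l
  simp only [Pi.sub_apply, Pi.single_apply] at h1
  split_ifs at h1 <;> first
    | exact hjl.ne' ‹l = j›
    | exact ‹¬(l = l)› rfl
    | linarith

lemma single_ne_add {n : ℕ} {k j l : Fin n} (hjl : j < l) :
    (Pi.single j 1 : Fin n → ℝ) + Pi.single l 1 ≠ Pi.single k 1 := by
  intro h
  have h1 := congrFun h l
  have h2 := congrFun h j
  simp only [Pi.add_apply, Pi.single_apply] at h1 h2
  split_ifs at h1 h2 <;> first
    | exact hjl.ne' ‹l = j›
    | exact hjl.ne ‹j = l›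
    | exact ‹¬(l = l)› rfl
    | exact ‹¬(j = j)› rfl
    | exact hjl.ne (‹j = k›.trans (‹l = k›).symm)
    | linarith

/-- If `S, S'` both contain the index `i` and `σ` is a face of `D_{n,S}` contained in the
coordinate hyperplane `H_i = {x_i = 0}`, then `σ` is also a face of `D_{n,S'}`. -/
theorem face_transfer_of_mem (n : ℕ) (hn : 2 ≤ n) (S S' : Set (Fin n)) (i : Fin n)
    (hiS : i ∈ S) (hiS' : i ∈ S') (σ : Set (Fin n → ℝ))
    (hface : IsFace n (dnsArr n S) σ) (hsub : σ ⊆ {x | x i = 0}) :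
    IsFace n (dnsArr n S') σ := by
  obtain ⟨hne, ε, hσ⟩ := hface
  obtain ⟨x₀, hx₀⟩ := hne
  have hx₀' := hσ ▸ hx₀
  have hx₀i : x₀ i = 0 := hsub hx₀
  -- the pairing normal
  set p : Fin n → (Fin n → ℝ) := fun k =>
    if i < k then Pi.single i (1 : ℝ) + Pi.single k 1 else Pi.single k (1 : ℝ) + Pi.single i 1
    with hp
  have hpDn : ∀ k : Fin n, k ≠ i → ∀ T : Set (Fin n), p k ∈ dnsArr n T := by
    intro k hk T
    left
    rcases lt_or_gt_of_ne hk with h | h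
    · exact ⟨k, i, h, Or.inr (by simp [hp, not_lt_of_gt h])⟩
    · exact ⟨i, k, h, Or.inr (by simp [hp, h])⟩
  have hpsum : ∀ (k : Fin n) (x : Fin n → ℝ), x i = 0 →
      ∑ t, p k t * x t = x k := by
    intro k x hxi
    by_cases h : i < k <;>
      simp [hp, h, Pi.single_apply, add_mul, ite_mul, Finset.sum_add_distrib, hxi]
  have hεi : ε (Pi.single i 1) = 0 := by
    have := hx₀' (Pi.single i 1) (Or.inr ⟨i, hiS, rfl⟩)
    rw [sum_single_mul, hx₀i] at this
    simpa using this.symm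
  have hεp : ∀ k : Fin n, k ≠ i → k ∈ S → ε (p k) = ε (Pi.single k 1) := by
    intro k hk hkS
    have h1 := hx₀' (p k) (hpDn k hk S)
    have h2 := hx₀' (Pi.single k 1) (Or.inr ⟨k, hkS, rfl⟩)
    rw [hpsum k x₀ hx₀i] at h1
    rw [sum_single_mul] at h2
    rw [← h1, ← h2]
  -- new sign function
  classical
  set ε' : (Fin n → ℝ) → SignType := fun a =>
    if h : ∃ k : Fin n, a = Pi.single k 1 ∧ k ≠ i then ε (p h.choose) else ε a
    with hε'
  have hε'single : ∀ k : Fin n, k ≠ i → ε' (Pi.single k 1) = ε (p k) := by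
    intro k hk
    have hex : ∃ k' : Fin n, (Pi.single k 1 : Fin n → ℝ) = Pi.single k' 1 ∧ k' ≠ i :=
      ⟨k, rfl, hk⟩
    rw [hε']
    beta_reduce
    rw [dif_pos hex]
    obtain ⟨h1, _⟩ := hex.choose_spec
    exact congrArg (fun t => ε (p t)) (single_inj h1).symm
  have hε'i : ε' (Pi.single i 1) = ε (Pi.single i 1) := by
    rw [hε']
    beta_reduce
    rw [dif_neg]
    rintro ⟨k, h1, h2⟩
    exact h2 (single_inj h1).symm
  have hε'Dn : ∀ a, (∃ j l : Fin n, j < l ∧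
      (a = Pi.single j (1 : ℝ) - Pi.single l 1 ∨ a = Pi.single j (1 : ℝ) + Pi.single l 1)) →
      ε' a = ε a := by
    rintro a ⟨j, l, hjl, hcase⟩
    rw [hε']
    beta_reduce
    rw [dif_neg]
    rintro ⟨k, h1, _⟩
    rcases hcase with rfl | rfl
    · exact single_ne_sub hjl h1
    · exact single_ne_add hjl h1
  refine ⟨⟨x₀, hx₀⟩, ε', ?_⟩
  ext x
  constructor
  · intro hx
    have hxi : x i = 0 := hsub hx
    have hx' := hσ ▸ hx
    rintro a (⟨j, l, hjl, hcase⟩ | ⟨k, hkS', rfl⟩)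
    · rw [hε'Dn a ⟨j, l, hjl, hcase⟩]
      exact hx' a (Or.inl ⟨j, l, hjl, hcase⟩)
    · rw [sum_single_mul]
      by_cases hk : k = i
      · subst hk
        rw [hε'i, hεi, hxi]
        simp
      · rw [hε'single k hk, ← hpsum k x hxi]
        exact hx' (p k) (hpDn k hk S)
  · intro hx
    have hxi : x i = 0 := by
      have := hx (Pi.single i 1) (Or.inr ⟨i, hiS', rfl⟩)
      rw [sum_single_mul, hε'i, hεi] at this
      exact sign_eq_zero_iff.mp this
    rw [hσ]
    rintro a (⟨j, l, hjl, hcase⟩ | ⟨k, hkS, rfl⟩)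
    · rw [← hε'Dn a ⟨j, l, hjl, hcase⟩]
      exact hx a (Or.inl ⟨j, l, hjl, hcase⟩)
    · rw [sum_single_mul]
      by_cases hk : k = i
      · subst hk
        rw [hεi, hxi]
        simp
      · rw [← hεp k hk hkS, ← hpsum k x hxi]
        have := hx (p k) (hpDn k hk S')
        rw [hε'Dn (p k)] at this
        · exact this
        · rcases lt_or_gt_of_ne hk with h | h
          · exact ⟨k, i, h, Or.inr (by simp [hp, not_lt_of_gt h])⟩
          · exact ⟨i, k, h, Or.inr (by simp [hp, h])⟩

end
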